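/- In the fair-division instance constructed from a graph G = (V,E) with n vertices and m edges as follows — goods: n core goods (one per vertex), guard goods e_i^b (i ∈ [m], b ∈ {1,2,3}), and a_1,a_2,a_3, x_1,x_2,x_3; agents for each b ∈ {1,2,3}: F_b = {E_i^b : i ∈ [m]}, A_b, B_b, and C_b = {C_i^b : i ∈ {0,…,n+1}}; valuations: A_b values all core goods and a_b, B_b values only x_b, E_i^b (for e_i = (v_p,v_q)) values {e_i^b, v_p, v_q, x_b, a_b}, each agent of C_b values all core goods and a_b; edges of H: A_b, C_0^b and B_b each adjacent to every agent of F_b, and C_b inducing a clique — every allocation π that is complete, non-wasteful, and locally proportional with respect to H satisfies, for each b ∈ {1,2,3}: π(B_b) = {x_b}; π(C_i^b) = ∅ for all i ∈ {0,…,n+1}; no core good is assigned to an agent of F_b; a_b ∈ π(A_b); and π(E_i^b) = {e_i^b} for all i ∈ [m]. -/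

import Mathlib

namespace ThreeColoringReduction

/-- Agents of the reduced instance: for each `b ∈ {1,2,3}`, the agents
`E_i^b` (`i ∈ [m]`, the set `F_b`), `A_b`, `B_b`, and `C_i^b` for
`i ∈ {0, 1, …, n+1}`. -/
inductive Agent (n m : ℕ) where
  | E (b : Fin 3) (i : Fin m)
  | A (b : Fin 3)
  | B (b : Fin 3)
  | C (b : Fin 3) (i : Fin (n + 2))
deriving DecidableEq, Fintype

/-- Goods of the reduced instance: `n` core goods (one per vertex of `G`),
guard goods `e_i^b`, and the goods `a_1, a_2, a_3, x_1, x_2, x_3`. -/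
inductive Good (n m : ℕ) where
  | core (i : Fin n)
  | guard (b : Fin 3) (i : Fin m)
  | a (b : Fin 3)
  | x (b : Fin 3)
deriving DecidableEq

/-- Base relation for the social network `H`: `A_b`, `C_0^b` and `B_b` are each
adjacent to every agent of `F_b`, and the agents of `C_b` induce a clique. -/
def rel (n m : ℕ) : Agent n m → Agent n m → Prop
  | .A b, .E b' _ => b = b'
  | .B b, .E b' _ => b = b'
  | .C b i, .E b' _ => b = b' ∧ i = (0 : Fin (n + 2))
  | .C b _, .C b' _ => b = b'
  | _, _ => False

instance (n m : ℕ) : DecidableRel (rel n m) := fun a b => by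
  cases a <;> cases b <;> simp only [rel] <;> infer_instance

/-- The social network `H` of the reduced instance. -/
def H (n m : ℕ) : SimpleGraph (Agent n m) := SimpleGraph.fromRel (rel n m)

instance (n m : ℕ) : DecidableRel (H n m).Adj := fun a b =>
  decidable_of_iff _ (SimpleGraph.fromRel_adj (rel n m) a b).symm

/-- Additive 0/1 valuations: `A_b` values all core goods and `a_b`; `B_b`
values only `x_b`; for `e_i = (v_p, v_q)` (endpoints given by `ep i`), the
agent `E_i^b` values `{e_i^b, v_p, v_q, x_b, a_b}`; every agent of `C_b`
values all core goods and `a_b`; everything else is 0. -/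
def val (n m : ℕ) (ep : Fin m → Fin n × Fin n) : Agent n m → Good n m → ℕ
  | .A _, .core _ => 1
  | .A b, .a b' => if b = b' then 1 else 0
  | .B b, .x b' => if b = b' then 1 else 0
  | .E b i, .guard b' j => if b = b' ∧ i = j then 1 else 0
  | .E _ i, .core p => if p = (ep i).1 ∨ p = (ep i).2 then 1 else 0
  | .E b _, .x b' => if b = b' then 1 else 0
  | .E b _, .a b' => if b = b' then 1 else 0
  | .C _ _, .core _ => 1
  | .C b _, .a b' => if b = b' then 1 else 0
  | _, _ => 0

/-- Local proportionality of the allocation `π` at every agent, stated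
multiplicatively: `(d(i)+1) · ν_i(π(i)) ≥ ∑_{j ∈ N[i]} ν_i(π(j))`. -/
def LocallyProportional (n m : ℕ) (ep : Fin m → Fin n × Fin n)
    (π : Agent n m → Finset (Good n m)) : Prop :=
  ∀ i : Agent n m,
    ∑ j ∈ insert i ((H n m).neighborFinset i), ∑ g ∈ π j, val n m ep i g
      ≤ ((H n m).degree i + 1) * ∑ g ∈ π i, val n m ep i g

/-- Auxiliary projection of goods to `Option (Fin n)`: core goods map to
their vertex, everything else to `none`. -/
def toOpt {n m : ℕ} : Good n m → Option (Fin n)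
  | .core p => some p
  | _ => none

/-- In the instance constructed from `G` (edges enumerated by
`ep`), every complete, non-wasteful, locally proportional allocation `π`
satisfies, for each `b ∈ {1,2,3}`: `π(B_b) = {x_b}`; `π(C_i^b) = ∅` for all
`i`; no core good is assigned to an agent of `F_b`; `a_b ∈ π(A_b)`; and
`π(E_i^b) = {e_i^b}` for all `i ∈ [m]`. -/
theorem forced_bundles
    (n m : ℕ) (G : SimpleGraph (Fin n)) (ep : Fin m → Fin n × Fin n)
    (hep : ∀ i : Fin m, G.Adj (ep i).1 (ep i).2)
    (hsurj : ∀ x y : Fin n, G.Adj x y → ∃ i : Fin m, ep i = (x, y) ∨ ep i = (y, x))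
    (hinj : ∀ i i' : Fin m,
      (ep i = ep i' ∨ ep i = ((ep i').2, (ep i').1)) → i = i')
    (π : Agent n m → Finset (Good n m))
    (hdisj : ∀ a b : Agent n m, a ≠ b → Disjoint (π a) (π b))
    (hcomplete : ∀ g : Good n m, ∃ a : Agent n m, g ∈ π a)
    (hnonwasteful : ∀ a : Agent n m, ∀ g ∈ π a, val n m ep a g = 1)
    (hlp : LocallyProportional n m ep π) :
    ∀ b : Fin 3,
      (π (Agent.B b) = {Good.x b}) ∧
      (∀ i : Fin (n + 2), π (Agent.C b i) = ∅) ∧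
      (∀ (i : Fin m) (p : Fin n), Good.core p ∉ π (Agent.E b i)) ∧
      (Good.a b ∈ π (Agent.A b)) ∧
      (∀ i : Fin m, π (Agent.E b i) = {Good.guard b i}) := by
  intro b
  -- adjacency facts
  have hAdjBE : ∀ i : Fin m, (H n m).Adj (.B b) (.E b i) := by
    intro i
    rw [H, SimpleGraph.fromRel_adj]
    exact ⟨by simp, Or.inl rfl⟩
  have hAdjC0E : ∀ i : Fin m, (H n m).Adj (.C b 0) (.E b i) := by
    intro i
    rw [H, SimpleGraph.fromRel_adj]
    exact ⟨by simp, Or.inl ⟨rfl, rfl⟩⟩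
  have hAdjCC : ∀ i j : Fin (n + 2), i ≠ j → (H n m).Adj (.C b i) (.C b j) := by
    intro i j hij
    rw [H, SimpleGraph.fromRel_adj]
    exact ⟨by simp [hij], Or.inl rfl⟩
  -- C-valuations do not depend on the index
  have hvalC : ∀ (i j : Fin (n + 2)) (g : Good n m),
      val n m ep (.C b i) g = val n m ep (.C b j) g := by
    intro i j g
    cases g <;> rfl
  -- Step A : π (B b) = {x b}
  have hB : π (.B b) = {Good.x b} := by
    have hxB : Good.x b ∈ π (.B b) := by
      by_contra hxB
      obtain ⟨w, hw⟩ := hcomplete (.x b)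
      have hwval := hnonwasteful w _ hw
      have hwE : ∃ i, w = Agent.E b i := by
        rcases w with ⟨b', i⟩ | b' | b' | ⟨b', i⟩ <;> simp [val] at hwval
        · exact ⟨i, by rw [hwval]⟩
        · exact absurd (hwval ▸ hw) hxB
      obtain ⟨i, rfl⟩ := hwE
      have h := hlp (.B b)
      have hBe : π (.B b) = ∅ := by
        rw [Finset.eq_empty_iff_forall_notMem]
        intro g hg
        have hv := hnonwasteful _ g hg
        rcases g with p | ⟨b', j⟩ | b' | b' <;> simp [val] at hv
        subst hv
        exact hxB hg
      have hmem : Agent.E b i ∈ insert (Agent.B b) ((H n m).neighborFinset (.B b)) :=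
        Finset.mem_insert_of_mem ((SimpleGraph.mem_neighborFinset _ _ _).2 (hAdjBE i))
      have h1 : 1 ≤ ∑ j ∈ insert (Agent.B b) ((H n m).neighborFinset (.B b)),
          ∑ g ∈ π j, val n m ep (.B b) g := by
        calc 1 = val n m ep (.B b) (.x b) := by simp [val]
        _ ≤ ∑ g ∈ π (.E b i), val n m ep (.B b) g :=
            Finset.single_le_sum (fun _ _ => Nat.zero_le _) hw
        _ ≤ _ := Finset.single_le_sum
            (f := fun j => ∑ g ∈ π j, val n m ep (.B b) g)
            (fun _ _ => Nat.zero_le _) hmem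
      rw [hBe] at h
      simp only [Finset.sum_empty, Nat.mul_zero] at h
      omega
    rw [Finset.eq_singleton_iff_unique_mem]
    refine ⟨hxB, fun g hg => ?_⟩
    have hv := hnonwasteful _ g hg
    rcases g with p | ⟨b', j⟩ | b' | b' <;> simp [val] at hv
    rw [hv]
  -- Step B : all C-agents get nothing
  have hC : ∀ i : Fin (n + 2), π (.C b i) = ∅ := by
    by_contra hne
    push_neg at hne
    obtain ⟨i0, hi0⟩ := hne
    obtain ⟨g0, hg0⟩ := hi0
    have hg0val : val n m ep (.C b i0) g0 = 1 := hnonwasteful _ _ hg0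
    have hCne : ∀ j : Fin (n + 2), (π (.C b j)).Nonempty := by
      intro j
      have h := hlp (.C b j)
      have hmem : Agent.C b i0 ∈ insert (Agent.C b j) ((H n m).neighborFinset (.C b j)) := by
        by_cases hij : i0 = j
        · subst hij; exact Finset.mem_insert_self _ _
        · exact Finset.mem_insert_of_mem
            ((SimpleGraph.mem_neighborFinset _ _ _).2 ((hAdjCC i0 j hij).symm))
      have h1 : 1 ≤ ∑ k ∈ insert (Agent.C b j) ((H n m).neighborFinset (.C b j)),
          ∑ g ∈ π k, val n m ep (.C b j) g := by
        calc 1 = val n m ep (.C b j) g0 := by rw [← hvalC i0 j, hg0val]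
        _ ≤ ∑ g ∈ π (.C b i0), val n m ep (.C b j) g :=
            Finset.single_le_sum (fun _ _ => Nat.zero_le _) hg0
        _ ≤ _ := Finset.single_le_sum
            (f := fun k => ∑ g ∈ π k, val n m ep (.C b j) g)
            (fun _ _ => Nat.zero_le _) hmem
      rw [Finset.nonempty_iff_ne_empty]
      intro hemp
      have hS : ∑ g ∈ π (.C b j), val n m ep (.C b j) g = 0 := by
        rw [hemp]; simp
      rw [hS, Nat.mul_zero] at h
      omega
    choose f hf using hCne
    have hfval : ∀ j, val n m ep (.C b j) (f j) = 1 := fun j => hnonwasteful _ _ (hf j)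
    have hshape : ∀ j, (∃ p, f j = Good.core p) ∨ f j = Good.a b := by
      intro j
      have hv := hfval j
      rcases hfj : f j with p | ⟨b', i⟩ | b' | b' <;> rw [hfj] at hv <;> simp [val] at hv
      · exact Or.inl ⟨p, rfl⟩
      · exact Or.inr (by rw [hv])
    have hFinj : Function.Injective (fun j => toOpt (f j)) := by
      intro j k hjk
      by_contra hne'
      have hd := hdisj (.C b j) (.C b k) (by simp [hne'])
      have hfeq : f j = f k := by
        rcases hshape j with ⟨p, hp⟩ | hp <;> rcases hshape k with ⟨q, hq⟩ | hq <;>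
          simp only [hp, hq, toOpt] at hjk ⊢
        · rw [Option.some.inj hjk]
        · exact absurd hjk (by simp)
        · exact absurd hjk (by simp)
      exact Finset.disjoint_left.mp hd (hf j) (hfeq ▸ hf k)
    have hcard := Fintype.card_le_of_injective _ hFinj
    simp [Fintype.card_option] at hcard
  -- Step C : E-agents hold no core goods and not a b
  have hEzero : ∀ (i : Fin m) (g : Good n m), g ∈ π (.E b i) →
      val n m ep (.C b 0) g = 0 := by
    intro i g hg
    have h := hlp (.C b 0)
    have hS : ∑ g ∈ π (.C b 0), val n m ep (.C b 0) g = 0 := by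
      rw [hC 0]; simp
    rw [hS, Nat.mul_zero, Nat.le_zero] at h
    have hmem : Agent.E b i ∈ insert (Agent.C b 0) ((H n m).neighborFinset (.C b 0)) :=
      Finset.mem_insert_of_mem ((SimpleGraph.mem_neighborFinset _ _ _).2 (hAdjC0E i))
    have hterm := (Finset.sum_eq_zero_iff.mp h) _ hmem
    exact (Finset.sum_eq_zero_iff.mp hterm) _ hg
  have hE_nocore : ∀ (i : Fin m) (p : Fin n), Good.core p ∉ π (.E b i) := by
    intro i p hp
    have := hEzero i _ hp
    simp [val] at this
  have hE_noa : ∀ i : Fin m, Good.a b ∉ π (.E b i) := by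
    intro i hp
    have := hEzero i _ hp
    simp [val] at this
  -- Step D : a b ∈ π (A b)
  have haA : Good.a b ∈ π (.A b) := by
    obtain ⟨w, hw⟩ := hcomplete (.a b)
    have hwv := hnonwasteful w _ hw
    rcases w with ⟨b', i⟩ | b' | b' | ⟨b', i⟩ <;> simp [val] at hwv
    · subst hwv; exact absurd hw (hE_noa i)
    · subst hwv; exact hw
    · subst hwv; rw [hC i] at hw; exact absurd hw (Finset.notMem_empty _)
  -- Step E : each E agent gets exactly its guard good
  have hguard : ∀ i : Fin m, π (.E b i) = {Good.guard b i} := by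
    intro i
    have hgm : Good.guard b i ∈ π (.E b i) := by
      obtain ⟨w, hw⟩ := hcomplete (.guard b i)
      have hwv := hnonwasteful w _ hw
      rcases w with ⟨b', j⟩ | b' | b' | ⟨b', j⟩ <;> simp [val] at hwv
      obtain ⟨rfl, rfl⟩ := hwv
      exact hw
    rw [Finset.eq_singleton_iff_unique_mem]
    refine ⟨hgm, fun g hg => ?_⟩
    have hv := hnonwasteful _ g hg
    rcases g with p | ⟨b', j⟩ | b' | b' <;> simp [val] at hv
    · exact absurd hg (hE_nocore i p)
    · obtain ⟨rfl, rfl⟩ := hv; rfl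
    · subst hv; exact absurd hg (hE_noa i)
    · subst hv
      have hd := hdisj (.E b i) (.B b) (by simp)
      exact absurd (hB ▸ Finset.mem_singleton_self (Good.x b))
        (Finset.disjoint_left.mp hd hg)
  exact ⟨hB, hC, hE_nocore, haA, hguard⟩


end ThreeColoringReduction
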